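/- arXiv:math/0307076 — 2 statements merged into one kernel-verified Lean document; each statement's English description precedes it below -/
import Mathlib

section
/- Let p be a prime, L a field of characteristic p, and k ⊆ L a subfield such that L contains two elements which are algebraically independent over k. Let φ : L → L be a field automorphism such that for every nonzero x ∈ L there exist a_x ∈ k and a nonnegative integer e_x with φ(x) = a_x · x^{p^{e_x}}. Then there exists a nonnegative integer e such that φ(x) = x^{p^e} for all x ∈ L, i.e., φ is the e-th power of the Frobenius endomorphism. -/
/-!
If `t` is transcendental over `k`, the identity `φ (t + 1) = φ t + 1` reads
`b t ^ q' + b = a t ^ q + 1` with `a = a_t`, `b = a_{t+1}`, which forces `a = 1`, i.e.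
`φ t = t ^ p ^ e_t`. For algebraically independent `s, t`, comparing monomials in
`φ (s + t) = φ s + φ t` gives `e_s = e_t`. By matroid exchange every transcendental `z` is
algebraically independent of one of the two given independent elements `x, y`, so all
transcendental elements share one exponent `e`; an algebraic `z` is then handled through the
transcendental element `x + z`.
-/

open AlgebraicIndependent Set

theorem transcendental_add_of_isAlgebraic {K L : Type*} [Field K] [Field L] [Algebra K L]
    {x z : L} (hx : Transcendental K x) (hz : IsAlgebraic K z) : Transcendental K (x + z) :=
  fun h => hx (by simpa using (h.isIntegral.sub hz.isIntegral).isAlgebraic)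

section Matroid

variable {R A : Type*} [CommRing R] [CommRing A] [Algebra R A] [FaithfulSMul R A]
  [NoZeroDivisors A]

theorem algebraicIndependent_pair_iff_matroid_indep {x y : A} (hxy : x ≠ y) :
    AlgebraicIndependent R ![x, y] ↔ (matroid R A).Indep {x, y} := by
  have hinj : Function.Injective ![x, y] := by
    simp [Function.Injective, Fin.forall_fin_two, hxy, hxy.symm]
  rw [matroid_indep_iff, ← Matrix.range_cons_cons_empty x y ![]]
  exact (algebraicIndependent_subtype_range hinj).symm

theorem matroid_indep_singleton_iff {z : A} : (matroid R A).Indep {z} ↔ Transcendental R z :=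
  algebraicIndependent_singleton_iff (⟨z, rfl⟩ : ({z} : Set A))

theorem AlgebraicIndependent.pair_or_pair_of_transcendental {x y z : A}
    (hxy : AlgebraicIndependent R ![x, y]) (hz : Transcendental R z) :
    AlgebraicIndependent R ![x, z] ∨ AlgebraicIndependent R ![y, z] := by
  nontriviality R
  have hne : x ≠ y := by simpa using hxy.injective.ne (show (0 : Fin 2) ≠ 1 by decide)
  obtain ⟨w, ⟨hw, hwz⟩, hind⟩ := (matroid_indep_singleton_iff.mpr hz).augment
    ((algebraicIndependent_pair_iff_matroid_indep hne).mp hxy)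
    (by rw [encard_singleton, encard_pair hne]; norm_num)
  rw [mem_singleton_iff] at hwz
  rw [← algebraicIndependent_pair_iff_matroid_indep hwz] at hind
  rcases hw with rfl | rfl
  · exact .inl hind
  · exact .inr hind

end Matroid

section FrobeniusPower

variable {L : Type*} [Field L]

def IsFrobeniusPowerUpToScalars {F : Type*} [FunLike F L L] (k : Subfield L) (p : ℕ) (φ : F) :
    Prop :=
  ∀ x : L, x ≠ 0 → ∃ (a : k) (e : ℕ), φ x = a * x ^ p ^ e

namespace IsFrobeniusPowerUpToScalars

variable {p : ℕ} [ExpChar L p] {F : Type*} [FunLike F L L] [RingHomClass F L L]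
  {k : Subfield L} {φ : F}

open Polynomial in
theorem exists_eq_pow_of_transcendental (hφ : IsFrobeniusPowerUpToScalars k p φ) {t : L}
    (ht : Transcendental k t) : ∃ e : ℕ, φ t = t ^ p ^ e := by
  have ht0 : t ≠ 0 := fun h => ht (h ▸ isAlgebraic_zero)
  have ht1 : t + 1 ≠ 0 := fun h =>
    transcendental_add_of_isAlgebraic ht isAlgebraic_one (h ▸ isAlgebraic_zero)
  obtain ⟨a, e, hae⟩ := hφ t ht0
  obtain ⟨b, f, hbf⟩ := hφ (t + 1) ht1
  have ha : a ≠ 0 := by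
    rintro rfl
    simp [(map_ne_zero φ).mpr ht0] at hae
  have hpoly : C b * X ^ p ^ f + C b = C a * X ^ p ^ e + 1 := by
    refine transcendental_iff_injective.mp ht ?_
    have := map_add φ t 1
    rw [hbf, hae, add_pow_expChar_pow, map_one, one_pow] at this
    simpa [mul_add, Subfield.algebraMap_ofSubfield] using this
  have hb : b = 1 := by
    simpa [coeff_X_pow, (expChar_pow_pos L p e).ne, (expChar_pow_pos L p f).ne]
      using congrArg (coeff · 0) hpoly
  have ha1 : a = 1 := by
    have := congrArg (coeff · (p ^ e)) hpoly
    simp only [hb, map_one, one_mul, coeff_add, coeff_X_pow, coeff_C_mul, ↓reduceIte, mul_one,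
      add_left_inj] at this
    split_ifs at this
    exacts [this.symm, absurd this.symm ha]
  exact ⟨e, by simp [hae, ha1]⟩

open MvPolynomial in
theorem pow_eq_pow_of_algebraicIndependent (hφ : IsFrobeniusPowerUpToScalars k p φ) {s t : L}
    (hst : AlgebraicIndependent k ![s, t]) {e f : ℕ} (hs : φ s = s ^ p ^ e)
    (ht : φ t = t ^ p ^ f) : p ^ e = p ^ f := by
  have hst0 : s + t ≠ 0 := fun h => by
    have : (X 0 + X 1 : MvPolynomial (Fin 2) k) = 0 :=
      hst.eq_zero_of_aeval_eq_zero _ (by simpa using h)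
    simpa using congrArg (eval ![1, 0]) this
  obtain ⟨c, r, hcr⟩ := hφ (s + t) hst0
  have hpoly : (X 0 ^ p ^ e + X 1 ^ p ^ f : MvPolynomial (Fin 2) k)
      = C c * X 0 ^ p ^ r + C c * X 1 ^ p ^ r := by
    refine hst ?_
    have := map_add φ s t
    rw [hcr, hs, ht, add_pow_expChar_pow] at this
    simpa [mul_add, Subfield.algebraMap_ofSubfield] using this.symm
  have hp : p ≠ 0 := (expChar_pos L p).ne'
  have hre : p ^ r = p ^ e := by_contra fun h => by
    simpa [coeff_X_pow, Finsupp.single_eq_single_iff, hp, h]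
      using congrArg (coeff (Finsupp.single 0 (p ^ e))) hpoly
  have hrf : p ^ r = p ^ f := by_contra fun h => by
    simpa [coeff_X_pow, Finsupp.single_eq_single_iff, hp, h]
      using congrArg (coeff (Finsupp.single 1 (p ^ f))) hpoly
  exact hre.symm.trans hrf

end IsFrobeniusPowerUpToScalars

end FrobeniusPower

/-- Let `L` be a field of characteristic `p`, `k ⊆ L` a subfield such that
`L` contains two elements algebraically independent over `k`, and `φ : L → L` a field
automorphism such that each nonzero `x ∈ L` satisfies `φ x = a_x * x ^ p ^ e_x` for some
`a_x ∈ k` and `e_x ≥ 0`. Then `φ` is a power of the Frobenius: `φ x = x ^ p ^ e` for all `x`. -/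
theorem statement12 (p : ℕ) [Fact p.Prime] (L : Type*) [Field L] [CharP L p]
    (k : Subfield L)
    (hindep : ∃ x y : L, AlgebraicIndependent k ![x, y])
    (φ : L ≃+* L)
    (hφ : ∀ x : L, x ≠ 0 → ∃ (a : k) (e : ℕ), φ x = (a : L) * x ^ p ^ e) :
    ∃ e : ℕ, ∀ x : L, φ x = x ^ p ^ e := by
  replace hφ : IsFrobeniusPowerUpToScalars k p φ := hφ
  obtain ⟨x, y, hxy⟩ := hindep
  have htx : Transcendental k x := by simpa using hxy.transcendental 0
  obtain ⟨e, hx⟩ := hφ.exists_eq_pow_of_transcendental htx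
  obtain ⟨f, hyf⟩ := hφ.exists_eq_pow_of_transcendental (by simpa using hxy.transcendental 1)
  have hy : φ y = y ^ p ^ e := by
    rw [hyf, hφ.pow_eq_pow_of_algebraicIndependent hxy hx hyf]
  have htrans : ∀ z, Transcendental k z → φ z = z ^ p ^ e := by
    intro z hz
    obtain ⟨g, hg⟩ := hφ.exists_eq_pow_of_transcendental hz
    rw [hg]
    rcases hxy.pair_or_pair_of_transcendental hz with hxz | hyz
    · rw [hφ.pow_eq_pow_of_algebraicIndependent hxz hx hg]
    · rw [hφ.pow_eq_pow_of_algebraicIndependent hyz hy hg]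
  refine ⟨e, fun z => ?_⟩
  by_cases hz : IsAlgebraic k z
  · have := htrans (x + z) (transcendental_add_of_isAlgebraic htx hz)
    rwa [map_add, hx, add_pow_expChar_pow, add_right_inj] at this
  · exact htrans z hz
end

section
/- Let K|k be a function field over an algebraically closed field k and let ℓ be a prime. Then an element x ∈ K^× is an ℓ^n-th power in K^× for every n ≥ 1 if and only if x ∈ k^×; equivalently, ⋂_{n≥1} (K^×)^{ℓ^n} = k^×. -/
/-!
An element algebraic over the algebraically closed field `k` lies in `k`. A transcendental `x`
extends to a transcendence basis `B` of `K|k`, and `K` is finite over `E = k(B)`, say of degree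
`D`. Taking norms from `K` to `E`, an equation `y ^ m = x` gives `N(y) ^ m = x ^ D` in the rational
function field `k(B)`, where `x` is one of the variables; comparing degrees in `x` gives `m ∣ D`.
So `x` is not an `ℓ ^ n`-th power as soon as `ℓ ^ n > D`.
-/

open MvPolynomial

theorem dvd_of_pow_eq_pow_of_mem_adjoin {k K ι : Type*} [Field k] [Field K] [Algebra k K]
    {v : ι → K} (hv : AlgebraicIndependent k v) (i : ι) {b : K}
    (hb : b ∈ IntermediateField.adjoin k (Set.range v)) {m d : ℕ} (hm : m ≠ 0)
    (h : b ^ m = v i ^ d) : m ∣ d := by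
  obtain ⟨r, hr, s, hs, rfl⟩ := IntermediateField.mem_adjoin_iff_div.mp hb
  rw [Algebra.adjoin_range_eq_range_aeval] at hr hs
  obtain ⟨p, rfl⟩ := hr
  obtain ⟨q, rfl⟩ := hs
  simp only [AlgHom.toRingHom_eq_coe, RingHom.coe_coe] at h
  have hvi : v i ^ d ≠ 0 := pow_ne_zero d fun h0 ↦ hv.transcendental i (h0 ▸ isAlgebraic_zero)
  have hq : aeval v q ≠ 0 := by
    intro hq
    rw [hq, div_zero, zero_pow hm] at h
    exact hvi h.symm
  have hp : aeval v p ≠ 0 := by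
    intro hp
    rw [hp, zero_div, zero_pow hm] at h
    exact hvi h.symm
  have hpoly : p ^ m = X i ^ d * q ^ m := by
    refine sub_eq_zero.mp (hv.eq_zero_of_aeval_eq_zero _ ?_)
    rw [div_pow, div_eq_iff (pow_ne_zero m hq)] at h
    simp [h]
  have hp0 : p ≠ 0 := by rintro rfl; simp at hp
  have hq0 : q ≠ 0 := by rintro rfl; simp at hq
  have hdeg := congrArg (degreeOf i) hpoly
  rw [degreeOf_pow_eq i p m hp0, degreeOf_mul_eq (pow_ne_zero d (X_ne_zero i))
    (pow_ne_zero m hq0), degreeOf_X_self_pow, degreeOf_pow_eq i q m hq0] at hdeg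
  exact (Nat.dvd_add_left (dvd_mul_right m _)).mp ⟨_, hdeg.symm⟩

theorem exists_dvd_of_pow_eq_of_transcendental {k K : Type*} [Field k] [Field K] [Algebra k K]
    [Algebra.EssFiniteType k K] {x : K} (hx : Transcendental k x) :
    ∃ D ≠ 0, ∀ (m : ℕ) (y : K), m ≠ 0 → y ^ m = x → m ∣ D := by
  obtain ⟨B, hxB, hB⟩ := exists_isTranscendenceBasis_superset (R := k) (s := {x})
    ((algebraicIndependent_singleton_iff (⟨x, rfl⟩ : ({x} : Set K))).mpr hx)
  set E := IntermediateField.adjoin k (Set.range ((↑) : B → K))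
  have := hB.isAlgebraic_field
  have := Algebra.EssFiniteType.of_comp k E K
  have := Algebra.finite_of_essFiniteType_of_isAlgebraic (F := E) (E := K)
  have hxE : x ∈ E := IntermediateField.subset_adjoin _ _ ⟨⟨x, hxB rfl⟩, rfl⟩
  refine ⟨Module.finrank E K, Module.finrank_pos.ne', fun m y hm hy ↦ ?_⟩
  have hnorm : ((Algebra.norm E y : E) : K) ^ m = x ^ Module.finrank E K := by
    have hx' : algebraMap E K ⟨x, hxE⟩ = x := rfl
    rw [← IntermediateField.coe_pow, ← map_pow, hy, ← hx', Algebra.norm_algebraMap]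
    exact map_pow (algebraMap E K) _ _
  exact dvd_of_pow_eq_pow_of_mem_adjoin hB.1 ⟨x, hxB rfl⟩ (Algebra.norm E y).2 hm hnorm

/-- For a function field `K|k` over an algebraically closed field `k` and a
prime `ℓ`, a nonzero `x ∈ K` is an `ℓ^n`-th power for every `n ≥ 1` if and only if `x` is a
nonzero constant, i.e. `⋂_{n ≥ 1} (K^×)^{ℓ^n} = k^×`. -/
theorem statement16 (ℓ : ℕ) (hℓ : ℓ.Prime)
    (k K : Type*) [Field k] [Field K] [Algebra k K] [IsAlgClosed k]
    (hKfg : (⊤ : IntermediateField k K).FG)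
    (x : K) (hx : x ≠ 0) :
    (∀ n : ℕ, 1 ≤ n → ∃ y : K, y ^ ℓ ^ n = x) ↔
      ∃ c : k, c ≠ 0 ∧ algebraMap k K c = x := by
  constructor
  · intro hdiv
    by_cases halg : IsAlgebraic k x
    · obtain ⟨c, rfl⟩ := minpoly.mem_range_of_degree_eq_one k x
        (IsAlgClosed.degree_eq_one_of_irreducible k (minpoly.irreducible halg.isIntegral))
      exact ⟨c, by rintro rfl; simp at hx, rfl⟩
    · have := IntermediateField.fg_top_iff.mp hKfg
      obtain ⟨D, hD, hdvd⟩ := exists_dvd_of_pow_eq_of_transcendental halg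
      obtain ⟨y, hy⟩ := hdiv D (Nat.one_le_iff_ne_zero.mpr hD)
      have hle := Nat.le_of_dvd (Nat.pos_of_ne_zero hD) (hdvd _ y (pow_ne_zero D hℓ.ne_zero) hy)
      exact absurd (Nat.lt_pow_self hℓ.one_lt) hle.not_gt
  · rintro ⟨c, -, rfl⟩ n -
    obtain ⟨z, hz⟩ := IsAlgClosed.exists_pow_nat_eq c (pow_pos hℓ.pos n)
    exact ⟨algebraMap k K z, by rw [← map_pow, hz]⟩
end
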